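/- arXiv:2404.02040 — 3 statements merged into one kernel-verified Lean document; each statement's English description precedes it below -/
import Mathlib

section
/- The transduction copy-first-half, mapping each word u to its prefix of length ⌊|u|/2⌋, does not preserve regular languages under inverse image; specifically, the inverse image of the regular language a* is not regular (assuming the alphabet has at least two symbols). -/
/-- `copy-first-half` maps a word to its prefix of length `⌊|u|/2⌋`. -/
def copyFirstHalf {A : Type} (u : List A) : List A :=
  u.take (u.length / 2)

lemma mem_zeroLang_iff (w : List (Fin 2)) :
    w ∈ {w : List (Fin 2) | ∃ n : ℕ, w = List.replicate n 0} ↔ ∀ a ∈ w, a = 0 := by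
  constructor
  · rintro ⟨n, rfl⟩ a ha
    exact List.eq_of_mem_replicate ha
  · intro h
    exact ⟨w.length, (List.eq_replicate_iff.2 ⟨rfl, h⟩)⟩

/-- The DFA recognizing `0*`. -/
def zeroDFA : DFA (Fin 2) Bool where
  step s c := s || decide (c ≠ 0)
  start := false
  accept := {b | b = false}

lemma zeroDFA_evalFrom (w : List (Fin 2)) (s : Bool) :
    zeroDFA.evalFrom s w = false ↔ s = false ∧ ∀ a ∈ w, a = 0 := by
  induction w generalizing s with
  | nil => simp
  | cons a w ih =>
    simp only [DFA.evalFrom, List.foldl_cons] at *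
    rw [ih]
    constructor
    · rintro ⟨h1, h2⟩
      simp only [zeroDFA, Bool.or_eq_false_iff, decide_eq_false_iff_not, not_not] at h1
      exact ⟨h1.1, by simpa [h1.2] using h2⟩
    · rintro ⟨h1, h2⟩
      have ha : a = 0 := h2 a (List.mem_cons_self ..)
      refine ⟨by simp [zeroDFA, h1, ha], fun b hb => h2 b (List.mem_cons_of_mem _ hb)⟩

/-- The transduction `copy-first-half` does not preserve regular languages
under inverse image: over the alphabet `{a, b}` (encoded as `Fin 2`, `a = 0`,
`b = 1`), the language `a*` is regular, but its inverse image under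
`copy-first-half` is not regular. -/
theorem copyFirstHalf_not_inverse_regular :
    Language.IsRegular {w : List (Fin 2) | ∃ n : ℕ, w = List.replicate n 0} ∧
    ¬ Language.IsRegular
        (copyFirstHalf ⁻¹' {w : List (Fin 2) | ∃ n : ℕ, w = List.replicate n 0}) := by
  constructor
  · refine ⟨Bool, inferInstance, zeroDFA, ?_⟩
    ext w
    rw [DFA.mem_accepts]
    show zeroDFA.evalFrom false w ∈ {b | b = false} ↔ _
    change _ ↔ w ∈ ({w : List (Fin 2) | ∃ n : ℕ, w = List.replicate n 0} : Set (List (Fin 2)))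
    rw [Set.mem_setOf_eq, zeroDFA_evalFrom, mem_zeroLang_iff]
    simp
  · rintro ⟨σ, finσ, M, hM⟩
    -- pigeonhole on states of 0^i
    obtain ⟨i, j, hij, heq⟩ :=
      Finite.exists_ne_map_eq_of_infinite (fun n : ℕ => M.eval (List.replicate n (0 : Fin 2)))
    wlog hlt : i < j generalizing i j
    · exact this j i hij.symm heq.symm (by omega)
    -- distinguishing suffix
    set z : List (Fin 2) := List.replicate (j + 1) 1 with hz
    have hevals : M.eval (List.replicate i (0 : Fin 2) ++ z) =
        M.eval (List.replicate j (0 : Fin 2) ++ z) := by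
      simp only [DFA.eval, DFA.evalFrom_of_append]
      rw [show M.evalFrom M.start (List.replicate i (0 : Fin 2)) =
        M.evalFrom M.start (List.replicate j (0 : Fin 2)) from heq]
    have hacc : (List.replicate i (0 : Fin 2) ++ z ∈ M.accepts) ↔
        (List.replicate j (0 : Fin 2) ++ z ∈ M.accepts) := by
      rw [DFA.mem_accepts, DFA.mem_accepts, hevals]
    rw [hM] at hacc
    -- 0^j ++ 1^(j+1) is in the preimage
    have hjmem : List.replicate j (0 : Fin 2) ++ z ∈
        copyFirstHalf ⁻¹' {w : List (Fin 2) | ∃ n : ℕ, w = List.replicate n 0} := by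
      simp only [Set.mem_preimage, copyFirstHalf, hz]
      rw [mem_zeroLang_iff]
      intro a ha
      have hlen : (List.replicate j (0 : Fin 2) ++ List.replicate (j + 1) 1).length = 2 * j + 1 := by
        simp; omega
      rw [hlen] at ha
      have : (2 * j + 1) / 2 = j := by omega
      rw [this] at ha
      have : (List.replicate j (0 : Fin 2) ++ List.replicate (j + 1) 1).take j
          = List.replicate j (0 : Fin 2) := List.take_left' (by simp)
      rw [this] at ha
      exact List.eq_of_mem_replicate ha
    -- 0^i ++ 1^(j+1) is not in the preimage
    have himem : List.replicate i (0 : Fin 2) ++ z ∉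
        copyFirstHalf ⁻¹' {w : List (Fin 2) | ∃ n : ℕ, w = List.replicate n 0} := by
      simp only [Set.mem_preimage, copyFirstHalf, hz]
      rw [mem_zeroLang_iff]
      intro h
      have hlen : (List.replicate i (0 : Fin 2) ++ List.replicate (j + 1) 1).length
          = i + (j + 1) := by simp
      rw [hlen] at h
      set m := (i + (j + 1)) / 2 with hm
      have hmi : i + 1 ≤ m := by omega
      have h1 : (1 : Fin 2) ∈ (List.replicate i (0 : Fin 2) ++ List.replicate (j + 1) 1).take m := by
        rw [List.take_append]
        refine List.mem_append.2 (Or.inr ?_)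
        rw [List.take_replicate]
        refine List.mem_replicate.2 ⟨?_, rfl⟩
        simp only [List.length_replicate]
        omega
      have := h 1 h1
      exact absurd this (by decide)
    exact himem (hacc.2 hjmem)
end

section
/- The map-reverse index formula is correct: if a position i lies strictly between consecutive separator positions p < i < q in a word (where positions p and q hold the separator '|' and no position strictly between them does), then the symbol of map-reverse(w) at position i equals the symbol of w at position p + q − i, and p < p + q − i < q. -/
/-- `map-reverse`: reverse each maximal separator-free block of `w`, keeping
the separators `sep` in place. -/
def mapReverse {A : Type} [DecidableEq A] (sep : A) (w : List A) : List A :=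
  List.intercalate [sep] ((w.splitOn sep).map List.reverse)

private lemma intercalate_cons' {A : Type} (s : A) (a : List A) (l : List (List A))
    (h : l ≠ []) :
    List.intercalate [s] (a :: l) = a ++ s :: List.intercalate [s] l := by
  cases l with
  | nil => simp at h
  | cons b t => simp [List.intercalate, List.intersperse_cons_cons]

private lemma intercalate_append' {A : Type} (s : A) (xs ys : List (List A))
    (hxs : xs ≠ []) (hys : ys ≠ []) :
    List.intercalate [s] (xs ++ ys) =
      List.intercalate [s] xs ++ s :: List.intercalate [s] ys := by
  induction xs with
  | nil => simp at hxs
  | cons a t ih =>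
    cases t with
    | nil =>
      simp only [List.singleton_append]
      rw [intercalate_cons' s a ys hys]
      simp [List.intercalate]
    | cons b u =>
      rw [List.cons_append, intercalate_cons' s a (b :: u ++ ys) (by simp),
        intercalate_cons' s a (b :: u) (by simp), ih (by simp)]
      simp

private lemma splitOn_append' {A : Type} [DecidableEq A] (s : A) (a r : List A) :
    (a ++ s :: r).splitOn s = a.splitOn s ++ r.splitOn s := by
  simp only [List.splitOn]
  induction a with
  | nil => simp [List.splitOnP_cons]
  | cons x t ih =>
    simp only [List.cons_append, List.splitOnP_cons]
    by_cases hx : x = s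
    · simp [hx, ih]
    · simp only [beq_iff_eq, if_neg hx]
      rw [ih]
      obtain ⟨y, ts, h⟩ : ∃ y ts, t.splitOnP (· == s) = y :: ts := by
        cases hh : t.splitOnP (· == s) with
        | nil => exact absurd hh (List.splitOnP_ne_nil _ t)
        | cons y ts => exact ⟨y, ts, rfl⟩
      simp [h]

private lemma mapReverse_append {A : Type} [DecidableEq A] (sep : A) (a r : List A) :
    mapReverse sep (a ++ sep :: r) = mapReverse sep a ++ sep :: mapReverse sep r := by
  unfold mapReverse
  rw [splitOn_append', List.map_append,
    intercalate_append' sep _ _ (by simp [List.splitOn, List.splitOnP_ne_nil])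
      (by simp [List.splitOn, List.splitOnP_ne_nil])]

private lemma mapReverse_no_sep {A : Type} [DecidableEq A] (sep : A) (m r : List A)
    (hm : sep ∉ m) :
    mapReverse sep (m ++ sep :: r) = m.reverse ++ sep :: mapReverse sep r := by
  unfold mapReverse
  rw [show (m ++ sep :: r).splitOn sep = m :: r.splitOn sep from
      List.splitOnP_first (fun x hx => by simp; rintro rfl; exact hm hx) sep (by simp) r]
  rw [List.map_cons,
    intercalate_cons' sep _ _ (by simp [List.splitOn, List.splitOnP_ne_nil])]

/-- Correctness of the `map-reverse` index formula: if `w` begins and ends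
with the separator, and `p < i < q` where positions `p` and `q` hold the
separator and no position strictly between them does, then the symbol of
`map-reverse w` at position `i` is the symbol of `w` at position
`p + q - i`, and `p < p + q - i < q`. -/
theorem mapReverse_index_formula {A : Type} [DecidableEq A] (sep : A)
    (w : List A) (hne : w ≠ []) (hhead : w.head? = some sep)
    (hlast : w.getLast? = some sep)
    (p i q : ℕ) (hpi : p < i) (hiq : i < q) (hq : q < w.length)
    (hp : w[p]? = some sep) (hqs : w[q]? = some sep)
    (hmid : ∀ j, p < j → j < q → w[j]? ≠ some sep) :
    (mapReverse sep w)[i]? = w[p + q - i]? ∧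
    p < p + q - i ∧ p + q - i < q := by
  have hplen : p < w.length := lt_trans (lt_trans hpi hiq) hq
  set a := w.take p with ha
  set m := (w.drop (p + 1)).take (q - (p + 1)) with hm
  set b := w.drop (q + 1) with hb
  have hwp : w[p] = sep := by
    have := List.getElem?_eq_getElem hplen ▸ hp; injection this
  have hwq : w[q] = sep := by
    have := List.getElem?_eq_getElem hq ▸ hqs; injection this
  have hal : a.length = p := by simp [ha]; omega
  have hml : m.length = q - (p + 1) := by simp [hm]; omega
  have hw : w = a ++ sep :: (m ++ sep :: b) := by
    conv_lhs => rw [← List.take_append_drop p w]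
    congr 1
    rw [List.drop_eq_getElem_cons hplen, hwp]
    congr 1
    conv_lhs => rw [← List.take_append_drop (q - (p + 1)) (w.drop (p + 1))]
    congr 1
    rw [List.drop_drop]
    have : p + 1 + (q - (p + 1)) = q := by omega
    rw [this, List.drop_eq_getElem_cons hq, hwq]
  have hsepm : sep ∉ m := by
    intro hmem
    obtain ⟨j, hj, hjm⟩ := List.getElem_of_mem hmem
    have hjlt : p + 1 + j < w.length := by
      have := hml; omega
    have hjm' : w[p + 1 + j]? = some sep := by
      rw [← hjm]
      have : m[j]? = w[p + 1 + j]? := by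
        rw [hm, List.getElem?_take_of_lt (by rw [hml] at hj; exact hj),
          List.getElem?_drop]
      rw [← this, List.getElem?_eq_getElem hj]
    exact hmid (p + 1 + j) (by omega) (by rw [hml] at hj; omega) hjm'
  have key : mapReverse sep w = mapReverse sep a ++ sep ::
      (m.reverse ++ sep :: mapReverse sep b) := by
    rw [hw, mapReverse_append, mapReverse_no_sep sep m b hsepm]
  -- length of mapReverse a = length a
  have lenint : ∀ (L : List (List A)),
      (List.intercalate [sep] (L.map List.reverse)).length =
        (List.intercalate [sep] L).length := by
    intro L
    induction L with
    | nil => simp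
    | cons x t ih =>
      cases t with
      | nil => simp [List.intercalate]
      | cons y u =>
        rw [List.map_cons, intercalate_cons' sep _ _ (by simp),
          intercalate_cons' sep _ _ (by simp)]
        simp only [List.length_append, List.length_reverse, List.length_cons]
        rw [ih]
  have hlen : (mapReverse sep a).length = p := by
    have := lenint (a.splitOn sep)
    rw [List.intercalate_splitOn] at this
    rw [mapReverse, this, hal]
  refine ⟨?_, by omega, by omega⟩
  have hk : i - (p + 1) < m.reverse.length := by
    simp only [List.length_reverse]; omega
  have hj : p + q - i - (p + 1) < m.length := by omega
  rw [key, hw]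
  rw [List.getElem?_append_right (by omega : (mapReverse sep a).length ≤ i)]
  rw [List.getElem?_append_right (by omega : a.length ≤ p + q - i)]
  rw [hlen, hal]
  have h1 : i - p = (i - (p + 1)) + 1 := by omega
  have h2 : p + q - i - p = (p + q - i - (p + 1)) + 1 := by omega
  rw [h1, h2, List.getElem?_cons_succ, List.getElem?_cons_succ]
  rw [List.getElem?_append_left hk, List.getElem?_append_left hj]
  rw [List.getElem?_reverse (by simpa using hk)]
  congr 1
  omega
end

section
/- Composition of transductions computed with minimum-vector-length bounds composes the bounds: if f₁ is computed correctly on all padded vectors of length n > q₁(ℓ) for inputs of length ℓ, and f₂ on lengths n > q₂(ℓ), and q₃ is a nondecreasing function with q₃(ℓ) ≥ max(q₁(ℓ), q₂(q₁(ℓ))) and |f₁(w)| ≤ q₁(|w|) for all w, then f₂ ∘ f₁ is computed correctly on all padded vectors of length n > q₃(ℓ). -/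
/-- Composition of transductions computed with minimum-vector-length bounds:
if `F₁` agrees with `f₁` (modulo padding) on all vector lengths `n > q₁ ℓ`
for inputs of length `ℓ`, and `F₂` agrees with `f₂` on lengths `n > q₂ ℓ`,
the output lengths are bounded by the `qᵢ`, and `q₃` is nondecreasing with
`q₃ ℓ ≥ max (q₁ ℓ) (q₂ (q₁ ℓ))`, then `F₂ ∘ F₁` agrees with `f₂ ∘ f₁`
(modulo padding) on all vector lengths `n > q₃ ℓ`. -/
theorem composition_with_min_vector_length
    {A B C : Type} (padA : A) (padB : B) (padC : C)
    (f₁ : List A → List B) (f₂ : List B → List C)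
    (F₁ : List A → List B) (F₂ : List B → List C)
    (q₁ q₂ q₃ : ℕ → ℕ)
    (hq₁ : Monotone q₁) (hq₂ : Monotone q₂) (hq₃ : Monotone q₃)
    (hlen₁ : ∀ w : List A, (f₁ w).length ≤ q₁ w.length)
    (hlen₂ : ∀ v : List B, (f₂ v).length ≤ q₂ v.length)
    (h₁ : ∀ (w : List A) (n : ℕ), q₁ w.length < n →
      F₁ (w ++ List.replicate (n - w.length) padA) =
        f₁ w ++ List.replicate (n - (f₁ w).length) padB)
    (h₂ : ∀ (v : List B) (n : ℕ), q₂ v.length < n →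
      F₂ (v ++ List.replicate (n - v.length) padB) =
        f₂ v ++ List.replicate (n - (f₂ v).length) padC)
    (hq₃ge : ∀ ℓ : ℕ, max (q₁ ℓ) (q₂ (q₁ ℓ)) ≤ q₃ ℓ) :
    ∀ (w : List A) (n : ℕ), q₃ w.length < n →
      F₂ (F₁ (w ++ List.replicate (n - w.length) padA)) =
        f₂ (f₁ w) ++ List.replicate (n - (f₂ (f₁ w)).length) padC := by
  intro w n hn
  have hmax := hq₃ge w.length
  have hq1n : q₁ w.length < n := lt_of_le_of_lt (le_trans (le_max_left _ _) hmax) hn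
  rw [h₁ w n hq1n]
  exact h₂ (f₁ w) n (lt_of_le_of_lt
    (le_trans (hq₂ (hlen₁ w)) (le_trans (le_max_right _ _) hmax)) hn)
end
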